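/- arXiv:2312.13910 — 2 statements merged into one kernel-verified Lean document; each statement's English description precedes it below -/
import Mathlib

section
/- For any sequence of nonnegative numbers x_1, ..., x_n satisfying 0 ≤ x_k ≤ X_{k-1} := max{1, Σ_{i=1}^{k-1} x_i} for all k, it holds that Σ_{k=1}^n x_k / √(X_{k-1}) ≤ (√2 + 1) · √(X_n). -/
/-!
Track the potential `Φ(s) = min s 1 + (√2 + 1)(√(max 1 s) - 1)` of the partial sum `s`.
Each term `x / √(max 1 s)` is at most the increment `Φ(s + x) - Φ(s)`: writing `a = max 1 s`, this
comes down to `x / √a ≤ (√2 + 1)(√(a + x) - √a)`, i.e. `(√(a + x) + √a) / √a ≤ √2 + 1`, which is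
`a + x ≤ 2a`. Summing telescopes to `Φ(S_n) ≤ (√2 + 1) √(X_n)`.
-/

open Finset

noncomputable section

def sqrtSumPotential (s : ℝ) : ℝ :=
  min s 1 + (√2 + 1) * (√(max 1 s) - 1)

theorem div_sqrt_le_mul_sqrt_add_sub {a x : ℝ} (ha : 0 < a) (hx₀ : 0 ≤ x) (hxa : x ≤ a) :
    x / √a ≤ (√2 + 1) * (√(a + x) - √a) := by
  have hsa : 0 < √a := Real.sqrt_pos.mpr ha
  have h_le : √a ≤ √(a + x) := Real.sqrt_le_sqrt (by linarith)
  have h_two : √(a + x) ≤ √2 * √a := by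
    rw [← Real.sqrt_mul zero_le_two]
    exact Real.sqrt_le_sqrt (by linarith)
  have h_sum : √(a + x) + √a ≤ (√2 + 1) * √a := by linarith
  rw [div_le_iff₀ hsa]
  calc x = (√(a + x) - √a) * (√(a + x) + √a) := by
        linear_combination -Real.sq_sqrt (by linarith : 0 ≤ a + x) + Real.sq_sqrt ha.le
    _ ≤ (√(a + x) - √a) * ((√2 + 1) * √a) := by gcongr
    _ = (√2 + 1) * (√(a + x) - √a) * √a := by ring

theorem sqrtSumPotential_zero : sqrtSumPotential 0 = 0 := by
  simp [sqrtSumPotential]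

theorem sqrtSumPotential_le (s : ℝ) : sqrtSumPotential s ≤ (√2 + 1) * √(max 1 s) := by
  have h_sqrt_two : 0 ≤ √2 := Real.sqrt_nonneg 2
  unfold sqrtSumPotential
  linarith [min_le_right s 1]

theorem div_sqrt_le_sqrtSumPotential_sub {s x : ℝ} (hx₀ : 0 ≤ x) (hx : x ≤ max 1 s) :
    x / √(max 1 s) ≤ sqrtSumPotential (s + x) - sqrtSumPotential s := by
  unfold sqrtSumPotential
  rcases le_or_gt 1 s with hs | hs
  · rw [max_eq_right hs] at hx ⊢
    rw [max_eq_right (by linarith), min_eq_right hs, min_eq_right (by linarith)]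
    linarith [div_sqrt_le_mul_sqrt_add_sub (by linarith) hx₀ hx]
  · rw [max_eq_left hs.le] at hx ⊢
    rw [min_eq_left hs.le, Real.sqrt_one, div_one]
    rcases le_or_gt (s + x) 1 with hsx | hsx
    · rw [max_eq_left hsx, min_eq_left hsx, Real.sqrt_one]
      linarith
    · rw [max_eq_right hsx.le, min_eq_right hsx.le]
      -- beyond `1` the increment is that of the case `a = 1`, applied to `s + x - 1`
      have h := div_sqrt_le_mul_sqrt_add_sub one_pos (x := s + x - 1) (by linarith) (by linarith)
      rw [Real.sqrt_one, div_one, add_sub_cancel] at h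
      linarith

end

theorem stmt_0 (n : ℕ) (x : ℕ → ℝ) (X : ℕ → ℝ)
    (hX : ∀ k, X k = max 1 (∑ i ∈ Finset.range k, x i))
    (hx : ∀ k < n, 0 ≤ x k ∧ x k ≤ X k) :
    ∑ k ∈ Finset.range n, x k / Real.sqrt (X k) ≤
      (Real.sqrt 2 + 1) * Real.sqrt (X n) := by
  set S : ℕ → ℝ := fun k ↦ ∑ i ∈ range k, x i
  calc ∑ k ∈ range n, x k / √(X k)
      ≤ ∑ k ∈ range n, (sqrtSumPotential (S (k + 1)) - sqrtSumPotential (S k)) := by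
        refine sum_le_sum fun k hk ↦ ?_
        obtain ⟨hx₀, hxX⟩ := hx k (mem_range.mp hk)
        rw [hX k] at hxX ⊢
        simpa only [S, sum_range_succ] using div_sqrt_le_sqrtSumPotential_sub hx₀ hxX
    _ = sqrtSumPotential (S n) := by
        rw [sum_range_sub (fun k ↦ sqrtSumPotential (S k)), show S 0 = 0 from sum_range_zero x,
          sqrtSumPotential_zero, sub_zero]
    _ ≤ (√2 + 1) * √(X n) := hX n ▸ sqrtSumPotential_le (S n)
end

section
/- With visit counts satisfying the doubling criterion—episode k ends when some state-action pair (s,a) has in-episode count u_k(s,a) equal to N_k^+(s,a) := max{1, N_k(s,a)}, where N_{k+1}(s,a) = N_k(s,a) + u_k(s,a)—the number of episodes K up to time T (with Σ_{s,a} N_{K+1}(s,a) = T) satisfies K ≤ S·A·log₂(8T/(S·A)) whenever T ≥ S·A. -/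
/-!
Say that the pair `i` triggers episode `k` if `u k i = max 1 (N k i)`. Every episode is triggered
by some pair, and each episode triggered by `i` at least doubles `max 1 (2 * N k i)`, so
`2 ^ K ≤ ∏ i, max 1 (2 * N (K + 1) i)`. By AM-GM this product is at most
`((∑ i, max 1 (2 * N (K + 1) i)) / SA) ^ SA ≤ (8 T / SA) ^ SA`, using `SA ≤ T`; now take `logb 2`.
-/

open Finset

theorem Finset.card_le_sum_card_filter {α ι : Type*} [Fintype ι] (s : Finset α) (p : ι → α → Prop)
    [∀ i, DecidablePred (p i)] (h : ∀ x ∈ s, ∃ i, p i x) :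
    #s ≤ ∑ i, #{x ∈ s | p i x} := by
  classical
  calc #s ≤ #(univ.biUnion fun i => {x ∈ s | p i x}) :=
        card_le_card fun x hx => by
          obtain ⟨i, hi⟩ := h x hx
          exact mem_biUnion.2 ⟨i, mem_univ _, mem_filter.2 ⟨hx, hi⟩⟩
    _ ≤ ∑ i, #{x ∈ s | p i x} := card_biUnion_le

theorem Real.prod_le_sum_div_card_pow {ι : Type*} (s : Finset ι) (z : ι → ℝ)
    (hz : ∀ i ∈ s, 0 ≤ z i) : ∏ i ∈ s, z i ≤ ((∑ i ∈ s, z i) / #s) ^ #s := by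
  rcases s.eq_empty_or_nonempty with rfl | hs
  · simp
  have hn : (#s : ℝ) ≠ 0 := Nat.cast_ne_zero.2 hs.card_pos.ne'
  have hamgm := Real.geom_mean_le_arith_mean_weighted s (fun _ => (#s : ℝ)⁻¹) z
    (fun _ _ => by positivity) (by simp [hn]) hz
  rw [Real.finsetProd_rpow s z hz, ← mul_sum, inv_mul_eq_div] at hamgm
  calc ∏ i ∈ s, z i = ((∏ i ∈ s, z i) ^ (#s : ℝ)⁻¹) ^ #s :=
        (Real.rpow_inv_natCast_pow (prod_nonneg hz) hs.card_pos.ne').symm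
    _ ≤ ((∑ i ∈ s, z i) / #s) ^ #s := pow_le_pow_left₀ (Real.rpow_nonneg (prod_nonneg hz) _) hamgm _

theorem two_pow_card_doubling_le (N u : ℕ → ℕ) (hN : ∀ k, N (k + 1) = N k + u k) (K : ℕ) :
    2 ^ #{k ∈ Icc 1 K | u k = max 1 (N k)} ≤ max 1 (2 * N (K + 1)) := by
  induction K with
  | zero => simp
  | succ K ih =>
    have hstep := hN (K + 1)
    rw [← insert_Icc_right_eq_Icc_add_one (by omega), filter_insert]
    split_ifs with hK
    · rw [card_insert_of_notMem (by simp), pow_succ]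
      omega
    · omega

section Doubling

variable {ι : Type*} [Fintype ι] (N u : ℕ → ι → ℕ) {K : ℕ}

theorem two_pow_le_prod_of_doubling (hN : ∀ k i, N (k + 1) i = N k i + u k i)
    (hdouble : ∀ k ∈ Icc 1 K, ∃ i, u k i = max 1 (N k i)) :
    2 ^ K ≤ ∏ i, max 1 (2 * N (K + 1) i) :=
  calc 2 ^ K ≤ 2 ^ ∑ i, #{k ∈ Icc 1 K | u k i = max 1 (N k i)} := by
        refine Nat.pow_le_pow_right two_pos ?_
        simpa using card_le_sum_card_filter (Icc 1 K) (fun i k => u k i = max 1 (N k i)) hdouble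
    _ = ∏ i, 2 ^ #{k ∈ Icc 1 K | u k i = max 1 (N k i)} := (prod_pow_eq_pow_sum _ _ _).symm
    _ ≤ ∏ i, max 1 (2 * N (K + 1) i) :=
        prod_le_prod' fun i _ => two_pow_card_doubling_le (N · i) (u · i) (hN · i) K

theorem le_card_mul_logb_of_doubling {T : ℕ} (hT : Fintype.card ι ≤ T)
    (hN : ∀ k i, N (k + 1) i = N k i + u k i)
    (hdouble : ∀ k ∈ Icc 1 K, ∃ i, u k i = max 1 (N k i))
    (htotal : ∑ i, N (K + 1) i = T) :
    (K : ℝ) ≤ Fintype.card ι * Real.logb 2 (8 * T / Fintype.card ι) := by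
  set n := Fintype.card ι
  have hsum : ∑ i, max 1 (2 * N (K + 1) i) ≤ 8 * T :=
    calc ∑ i, max 1 (2 * N (K + 1) i) ≤ ∑ i, (1 + 2 * N (K + 1) i) :=
          sum_le_sum fun i _ => by omega
      _ = n + 2 * T := by rw [sum_add_distrib, ← mul_sum, htotal]; simp [n]
      _ ≤ 8 * T := by omega
  have hpow : (2 : ℝ) ^ K ≤ (8 * T / n) ^ n :=
    calc (2 : ℝ) ^ K ≤ ∏ i, ((max 1 (2 * N (K + 1) i) : ℕ) : ℝ) := by
          exact_mod_cast two_pow_le_prod_of_doubling N u hN hdouble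
      _ ≤ ((∑ i, ((max 1 (2 * N (K + 1) i) : ℕ) : ℝ)) / n) ^ n :=
          Real.prod_le_sum_div_card_pow univ _ fun _ _ => by positivity
      _ ≤ (8 * T / n) ^ n := by gcongr; exact_mod_cast hsum
  calc (K : ℝ) = Real.logb 2 (2 ^ K) := by
        rw [Real.logb_pow, Real.logb_self_eq_one one_lt_two, mul_one]
    _ ≤ Real.logb 2 ((8 * T / n) ^ n) := Real.logb_le_logb_of_le one_lt_two (by positivity) hpow
    _ = n * Real.logb 2 (8 * T / n) := Real.logb_pow _ _ _

end Doubling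

theorem stmt_7_general (S A T K : ℕ)
    (hT : S * A ≤ T)
    (N u : ℕ → Fin (S * A) → ℕ)
    (hNrec : ∀ k sa, N (k + 1) sa = N k sa + u k sa)
    (hdouble : ∀ k ∈ Finset.Icc 1 K, ∃ sa, u k sa = max 1 (N k sa))
    (htotal : ∑ sa, N (K + 1) sa = T) :
    (K : ℝ) ≤ (S : ℝ) * A * Real.logb 2 (8 * T / (S * A)) := by
  simpa using le_card_mul_logb_of_doubling N u (by simpa using hT) hNrec hdouble htotal

theorem stmt_7 (S A T K : ℕ) (hS : 0 < S) (hA : 0 < A) (hK : 0 < K)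
    (hT : S * A ≤ T)
    (N u : ℕ → Fin (S * A) → ℕ)
    (hN1 : ∀ sa, N 1 sa = 0)
    (hNrec : ∀ k sa, N (k + 1) sa = N k sa + u k sa)
    (hdouble : ∀ k ∈ Finset.Icc 1 K, ∃ sa, u k sa = max 1 (N k sa))
    (htotal : ∑ sa, N (K + 1) sa = T) :
    (K : ℝ) ≤ (S : ℝ) * A * Real.logb 2 (8 * T / (S * A)) :=
  stmt_7_general S A T K hT N u hNrec hdouble htotal
end
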